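/- arXiv:1712.08131 — 4 statements merged into one kernel-verified Lean document; each statement's English description precedes it below -/
import Mathlib

section
/- Let X be a Noetherian, quasi-sober topological space (every nonempty irreducible closed subset has a generic point), let (S, ≤) be a linearly ordered set whose strict order < is well-founded, and let μ : X → S be any function. Then the following are equivalent: (i) for every s ∈ S the set {x ∈ X | s ≤ μ(x)} is closed in X; (ii) both of the following hold: (1) for all x, y ∈ X with x ∈ closure({y}) one has μ(y) ≤ μ(x), and (2) for every y ∈ X there exists a subset U of closure({y}) that is open in the subspace topology of closure({y}), dense in closure({y}), and satisfies μ(x) = μ(y) for all x ∈ U. -/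
/-- Semicontinuity criterion of Cossart–Jannsen–Saito (CJS Lemma 1.34(a)):
for a Noetherian, quasi-sober space `X` and a map `μ : X → S` into a linearly
ordered set with well-founded strict order, `μ` is upper semi-continuous
(all sets `{x | s ≤ μ x}` are closed) iff (1) `μ` does not decrease under
specialization, and (2) each `closure {y}` contains a dense open (in the
subspace topology) subset on which `μ` is constantly `μ y`. -/
theorem cjs_semicontinuity_criterion
    {X : Type*} [TopologicalSpace X] [TopologicalSpace.NoetherianSpace X]
    [QuasiSober X] {S : Type*} [LinearOrder S] [WellFoundedLT S]
    (μ : X → S) :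
    (∀ s : S, IsClosed {x : X | s ≤ μ x}) ↔
      ((∀ x y : X, x ∈ closure ({y} : Set X) → μ y ≤ μ x) ∧
        (∀ y : X, ∃ U : Set X, U ⊆ closure ({y} : Set X) ∧
          (∃ V : Set X, IsOpen V ∧ U = V ∩ closure ({y} : Set X)) ∧
          closure ({y} : Set X) ⊆ closure U ∧
          ∀ x ∈ U, μ x = μ y)) := by
  constructor
  · intro h
    have h1 : ∀ x y : X, x ∈ closure ({y} : Set X) → μ y ≤ μ x := by
      intro x y hx
      have : closure ({y} : Set X) ⊆ {x : X | μ y ≤ μ x} :=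
        closure_minimal (by simp) (h (μ y))
      exact this hx
    refine ⟨h1, fun y => ?_⟩
    set Z := closure ({y} : Set X) with hZ
    by_cases hT : ∃ x ∈ Z, μ y < μ x
    · -- take the minimal value strictly above μ y on Z
      have hTne : {s : S | ∃ x ∈ Z, μ x = s ∧ μ y < s}.Nonempty := by
        obtain ⟨x, hxZ, hx⟩ := hT
        exact ⟨μ x, x, hxZ, rfl, hx⟩
      obtain ⟨s₀, ⟨x₀, hx₀Z, hx₀, hys₀⟩, hmin⟩ :=
        wellFounded_lt.has_min _ hTne
      refine ⟨{x : X | ¬ s₀ ≤ μ x} ∩ Z, Set.inter_subset_right,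
        ⟨{x : X | ¬ s₀ ≤ μ x}, ?_, rfl⟩, ?_, ?_⟩
      · have : IsClosed {x : X | s₀ ≤ μ x} := h s₀
        simpa [Set.compl_setOf] using this.isOpen_compl
      · have hyU : y ∈ {x : X | ¬ s₀ ≤ μ x} ∩ Z := by
          refine ⟨fun hle => absurd (lt_of_lt_of_le hys₀ hle) (lt_irrefl _), ?_⟩
          exact subset_closure rfl
        exact closure_mono (Set.singleton_subset_iff.mpr hyU)
      · rintro x ⟨hxs, hxZ⟩
        have hle : μ y ≤ μ x := h1 x y hxZ
        by_contra hne
        have hlt2 : μ y < μ x := lt_of_le_of_ne hle (Ne.symm hne)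
        exact hxs (not_lt.mp (hmin (μ x) ⟨x, hxZ, rfl, hlt2⟩))
    · push_neg at hT
      refine ⟨Z, le_rfl, ⟨Set.univ, isOpen_univ, (Set.univ_inter Z).symm⟩,
        subset_closure, fun x hx => le_antisymm (hT x hx) (h1 x y hx)⟩
  · rintro ⟨h1, h2⟩ s
    -- Noetherian induction over closed sets
    suffices H : ∀ Z : TopologicalSpace.Closeds X,
        IsClosed ({x : X | s ≤ μ x} ∩ (Z : Set X)) by
      have := H ⊤
      simpa using this
    intro Z
    refine (wellFounded_lt (α := TopologicalSpace.Closeds X)).induction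
      (C := fun Z => IsClosed ({x : X | s ≤ μ x} ∩ (Z : Set X))) Z fun Z IH => ?_
    rcases eq_or_ne (Z : Set X) ∅ with hZe | hZne
    · rw [hZe]; simp
    by_cases hirr : IsPreirreducible (Z : Set X)
    · -- irreducible case
      have hZirr : IsIrreducible (Z : Set X) :=
        ⟨Set.nonempty_iff_ne_empty.mpr hZne, hirr⟩
      obtain ⟨η, hη⟩ := QuasiSober.sober hZirr Z.isClosed
      have hηZ : closure ({η} : Set X) = (Z : Set X) := hη
      obtain ⟨U, hUZ, ⟨V, hV, hUV⟩, hdense, hconst⟩ := h2 η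
      rw [hηZ] at hUZ hUV hdense
      by_cases hs : s ≤ μ η
      · have hsub : (Z : Set X) ⊆ {x : X | s ≤ μ x} := fun x hx =>
          le_trans hs (h1 x η (by rw [hηZ]; exact hx))
        rw [Set.inter_eq_right.mpr hsub]
        exact Z.isClosed
      · push_neg at hs
        have hUne : U.Nonempty := by
          by_contra he
          rw [Set.not_nonempty_iff_eq_empty] at he
          rw [he, closure_empty] at hdense
          exact hZne (Set.subset_empty_iff.mp hdense)
        set W : TopologicalSpace.Closeds X :=
          ⟨(Z : Set X) \ V, Z.isClosed.sdiff hV⟩ with hW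
        have hWlt : W < Z := by
          refine lt_of_le_of_ne (fun x hx => hx.1) ?_
          intro e
          obtain ⟨u, hu⟩ := hUne
          have huV : u ∈ V := (hUV ▸ hu).1
          have huZ : u ∈ (Z : Set X) := hUZ hu
          have : u ∈ (W : Set X) := by
            rw [show (W : Set X) = (Z : Set X) from congrArg _ e]
            exact huZ
          exact this.2 huV
        have key : {x : X | s ≤ μ x} ∩ (Z : Set X)
            = {x : X | s ≤ μ x} ∩ (W : Set X) := by
          ext x
          simp only [Set.mem_inter_iff, Set.mem_setOf_eq, hW,
            TopologicalSpace.Closeds.coe_mk, Set.mem_diff]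
          constructor
          · rintro ⟨hsx, hxZ⟩
            refine ⟨hsx, hxZ, fun hxV => ?_⟩
            have hxU : x ∈ U := hUV ▸ ⟨hxV, hxZ⟩
            have := hconst x hxU
            exact absurd (this ▸ hsx) (not_le.mpr hs)
          · rintro ⟨hsx, hxZ, _⟩
            exact ⟨hsx, hxZ⟩
        rw [key]
        exact IH W hWlt
    · -- reducible case
      rw [isPreirreducible_iff_isClosed_union_isClosed] at hirr
      push_neg at hirr
      obtain ⟨C₁, C₂, hC₁, hC₂, hsub, hn₁, hn₂⟩ := hirr
      set Z₁ : TopologicalSpace.Closeds X := ⟨(Z : Set X) ∩ C₁, Z.isClosed.inter hC₁⟩ with hZ₁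
      set Z₂ : TopologicalSpace.Closeds X := ⟨(Z : Set X) ∩ C₂, Z.isClosed.inter hC₂⟩ with hZ₂
      have h₁ : Z₁ < Z := by
        refine lt_of_le_of_ne Set.inter_subset_left ?_
        intro e
        refine hn₁ fun z hz => ?_
        have : z ∈ (Z₁ : Set X) := by
          rw [show (Z₁ : Set X) = (Z : Set X) from congrArg _ e]; exact hz
        exact this.2
      have h₂ : Z₂ < Z := by
        refine lt_of_le_of_ne Set.inter_subset_left ?_
        intro e
        refine hn₂ fun z hz => ?_
        have : z ∈ (Z₂ : Set X) := by
          rw [show (Z₂ : Set X) = (Z : Set X) from congrArg _ e]; exact hz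
        exact this.2
      have hunion : (Z : Set X) = (Z₁ : Set X) ∪ (Z₂ : Set X) := by
        ext x
        constructor
        · intro hx
          rcases hsub hx with h | h
          · exact Or.inl ⟨hx, h⟩
          · exact Or.inr ⟨hx, h⟩
        · rintro (⟨h, _⟩ | ⟨h, _⟩) <;> exact h
      rw [hunion, Set.inter_union_distrib_left]
      exact (IH Z₁ h₁).union (IH Z₂ h₂)
end

section
/- Let R be a commutative ring, let I be an ideal of the univariate polynomial ring R[X], and let i, ℓ ∈ ℕ with i ≤ ℓ. Then for every f ∈ I^ℓ, the i-th Hasse derivative of f (the R-linear map sending X^n to binom(n, i)·X^{n-i}) lies in I^{ℓ - i}. -/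
private lemma hasseDeriv_mem_pow_sub_aux {R : Type*} [CommRing R]
    (I : Ideal (Polynomial R)) (ℓ : ℕ) (f : Polynomial R) (hf : f ∈ I ^ ℓ) :
    ∀ i : ℕ, Polynomial.hasseDeriv i f ∈ I ^ (ℓ - i) := by
  induction hf using Submodule.pow_induction_on_left' with
  | algebraMap r =>
    intro i
    simp [Nat.zero_sub, Ideal.one_eq_top]
  | add x y n hx hy ihx ihy =>
    intro i
    simpa using add_mem (ihx i) (ihy i)
  | mem_mul m hm n x hx ih =>
    intro i
    rw [Polynomial.hasseDeriv_mul]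
    refine Ideal.sum_mem _ ?_
    rintro ⟨j, k⟩ hjk
    rw [Finset.HasAntidiagonal.mem_antidiagonal] at hjk
    rcases Nat.eq_zero_or_pos j with rfl | hj
    · have h1 : m * Polynomial.hasseDeriv k x ∈ I ^ (n - k + 1) := by
        rw [pow_succ']
        exact Ideal.mul_mem_mul hm (ih k)
      have h2 : Polynomial.hasseDeriv 0 m = m := by
        simp [Polynomial.hasseDeriv_zero]
      rw [h2]
      exact Ideal.pow_le_pow_right (by omega) h1
    · have h1 : Polynomial.hasseDeriv k x ∈ I ^ (n - k) := ih k
      have h2 : I ^ (n - k) ≤ I ^ (n + 1 - i) := Ideal.pow_le_pow_right (by omega)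
      exact Ideal.mul_mem_left _ _ (h2 h1)

/-- Instance for Hasse derivatives of the paper's Lemma 3.6 (after Giraud):
a differential operator of order ≤ i maps `I^ℓ` into `I^{ℓ-i}`.  Here: the
`i`-th Hasse derivative (the `R`-linear map sending `X^n` to
`binom(n,i)·X^{n-i}`) maps the `ℓ`-th power of an ideal `I` of `R[X]` into its
`(ℓ-i)`-th power, whenever `i ≤ ℓ`. -/
theorem hasseDeriv_mem_pow_sub {R : Type*} [CommRing R]
    (I : Ideal (Polynomial R)) (i ℓ : ℕ) (h : i ≤ ℓ)
    (f : Polynomial R) (hf : f ∈ I ^ ℓ) :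
    Polynomial.hasseDeriv i f ∈ I ^ (ℓ - i) :=
  hasseDeriv_mem_pow_sub_aux I ℓ f hf i
end

section
/- In the polynomial ring ℤ[u,v], the polynomial f = 12 − u·v² satisfies: f ∈ ⟨3, u, v⟩ but f ∉ ⟨3, u, v⟩², and f ∈ ⟨2, u, v⟩² but f ∉ ⟨2, u, v⟩³. In other words, the hypersurface V(f) has order exactly 1 at the closed point corresponding to the maximal ideal ⟨3, u, v⟩ (so it is a regular point of V(f) even though the fibre over 3 is singular there), and order exactly 2 at the closed point corresponding to ⟨2, u, v⟩. -/
open MvPolynomial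

lemma aux_not_mem (n k : ℕ) (hk : (12 : ZMod n) ≠ 0)
    (c : MvPolynomial (Fin 2) ℤ)
    (hc : (aeval (fun _ => (0 : ZMod n))) c ^ k = 0) :
    (12 : MvPolynomial (Fin 2) ℤ) - X 0 * X 1 ^ 2 ∉ (Ideal.span {c, X 0, X 1}) ^ k := by
  intro h
  set φ : MvPolynomial (Fin 2) ℤ →+* ZMod n :=
    (aeval (fun _ => (0 : ZMod n)) : MvPolynomial (Fin 2) ℤ →ₐ[ℤ] ZMod n).toRingHom with hφ
  have h1 : Ideal.map φ (Ideal.span {c, X 0, X 1}) ≤ Ideal.span {φ c} := by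
    rw [Ideal.map_span, Ideal.span_le]
    rintro x ⟨y, hy, rfl⟩
    simp only [Set.mem_insert_iff, Set.mem_singleton_iff] at hy
    rcases hy with rfl | rfl | rfl
    · exact Ideal.subset_span rfl
    · simp [hφ]
    · simp [hφ]
  have h2 : φ ((12 : MvPolynomial (Fin 2) ℤ) - X 0 * X 1 ^ 2) ∈
      (Ideal.span {φ c}) ^ k := by
    have := Ideal.mem_map_of_mem φ h
    rw [Ideal.map_pow] at this
    exact Ideal.pow_right_mono h1 _ this
  rw [Ideal.span_singleton_pow] at h2
  have h3 : (φ c) ^ k = 0 := hc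
  rw [h3, Ideal.span_singleton_eq_bot.mpr rfl, Ideal.mem_bot] at h2
  have hcalc : φ ((12 : MvPolynomial (Fin 2) ℤ) - X 0 * X 1 ^ 2) = 12 := by
    simp [hφ]
    rw [map_ofNat]
    norm_num
  rw [hcalc] at h2
  exact hk h2

/-- The paper's Example 3.3: in `ℤ[u,v]` (with `u = X 0`, `v = X 1`), the
polynomial `f = 12 − u·v²` has order exactly 1 at the maximal ideal
`⟨3, u, v⟩` and order exactly 2 at the maximal ideal `⟨2, u, v⟩`. -/
theorem example_12_sub_uv_sq_orders :
    ((12 : MvPolynomial (Fin 2) ℤ) - X 0 * X 1 ^ 2 ∈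
        Ideal.span {(3 : MvPolynomial (Fin 2) ℤ), X 0, X 1}) ∧
    ((12 : MvPolynomial (Fin 2) ℤ) - X 0 * X 1 ^ 2 ∉
        (Ideal.span {(3 : MvPolynomial (Fin 2) ℤ), X 0, X 1}) ^ 2) ∧
    ((12 : MvPolynomial (Fin 2) ℤ) - X 0 * X 1 ^ 2 ∈
        (Ideal.span {(2 : MvPolynomial (Fin 2) ℤ), X 0, X 1}) ^ 2) ∧
    ((12 : MvPolynomial (Fin 2) ℤ) - X 0 * X 1 ^ 2 ∉
        (Ideal.span {(2 : MvPolynomial (Fin 2) ℤ), X 0, X 1}) ^ 3) := by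
  refine ⟨?_, ?_, ?_, ?_⟩
  · have h3 : (3 : MvPolynomial (Fin 2) ℤ) ∈ Ideal.span {(3 : MvPolynomial (Fin 2) ℤ), X 0, X 1} :=
      Ideal.subset_span (by simp)
    have hu : (X 0 : MvPolynomial (Fin 2) ℤ) ∈ Ideal.span {(3 : MvPolynomial (Fin 2) ℤ), X 0, X 1} :=
      Ideal.subset_span (by simp)
    have : (12 : MvPolynomial (Fin 2) ℤ) = 4 * 3 := by norm_num
    rw [this]
    exact Ideal.sub_mem _ (Ideal.mul_mem_left _ _ h3) (Ideal.mul_mem_right _ _ hu)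
  · apply aux_not_mem 9 2 (by decide)
    simp
    decide
  · have h2 : (2 : MvPolynomial (Fin 2) ℤ) ∈ Ideal.span {(2 : MvPolynomial (Fin 2) ℤ), X 0, X 1} :=
      Ideal.subset_span (by simp)
    have hu : (X 0 : MvPolynomial (Fin 2) ℤ) ∈ Ideal.span {(2 : MvPolynomial (Fin 2) ℤ), X 0, X 1} :=
      Ideal.subset_span (by simp)
    have hv : (X 1 : MvPolynomial (Fin 2) ℤ) ∈ Ideal.span {(2 : MvPolynomial (Fin 2) ℤ), X 0, X 1} :=
      Ideal.subset_span (by simp)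
    have e12 : (12 : MvPolynomial (Fin 2) ℤ) = 3 * 2 ^ 2 := by norm_num
    have euv : (X 0 : MvPolynomial (Fin 2) ℤ) * X 1 ^ 2 = (X 0 * X 1) * X 1 := by ring
    rw [e12, euv]
    refine Ideal.sub_mem _ (Ideal.mul_mem_left _ _ (Ideal.pow_mem_pow h2 2)) ?_
    refine Ideal.mul_mem_right _ _ ?_
    rw [pow_two]
    exact Ideal.mul_mem_mul hu hv
  · apply aux_not_mem 8 3 (by decide)
    simp
    decide
end

section
/- Let f = x² − 5⁹·y³ ∈ ℤ[x,y]. Then for every prime ideal P of ℤ[x,y]: (a) f has order ≥ 2 at P (i.e., the image of f in the localization at P lies in the square of the ideal generated by the image of P) if and only if {x, y} ⊆ P or {x, 5} ⊆ P; and (b) f never has order ≥ 3 at P. Consequently the maximal order of the hypersurface V(f) over Spec ℤ is 2, and its locus of maximal order is V(x,y) ∪ V(x,5), the union of a horizontal component and a vertical component above the prime 5. -/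
open MvPolynomial

/-- `f` has order `≥ n` at the prime ideal `P`: the image of `f` in the
localization `B_P` lies in the `n`-th power of the ideal generated by the
image of `P`. -/
def hasOrderGE {B : Type*} [CommRing B] (f : B) (P : Ideal B) [P.IsPrime]
    (n : ℕ) : Prop :=
  algebraMap B (Localization.AtPrime P) f ∈
    (P.map (algebraMap B (Localization.AtPrime P))) ^ n

noncomputable abbrev Bpoly := MvPolynomial (Fin 2) ℤ

/-- Taylor-expansion map in the `v`-th variable: substitute `X v ↦ X v + t`. -/
noncomputable def phiv (v : Fin 2) : Bpoly →+* Polynomial Bpoly :=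
  (MvPolynomial.aeval fun i =>
    Polynomial.C (MvPolynomial.X i) + if i = v then Polynomial.X else 0).toRingHom

lemma phiv_coeff_zero (v : Fin 2) (p : Bpoly) : (phiv v p).coeff 0 = p := by
  have : (Polynomial.constantCoeff).comp (phiv v) = RingHom.id Bpoly := by
    apply MvPolynomial.ringHom_ext
    · intro r
      simp [phiv]
    · intro i
      by_cases h : i = v <;> simp [phiv, h]
  exact congrArg (fun g => g p) this

/-- The "vanishing at the expanded point" ideal. -/
noncomputable def Jid (P : Ideal Bpoly) : Ideal (Polynomial Bpoly) :=
  P.map (Polynomial.C : Bpoly →+* Polynomial Bpoly) ⊔ Ideal.span {Polynomial.X}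

lemma phiv_mem_Jid (v : Fin 2) {P : Ideal Bpoly} {p : Bpoly} (hp : p ∈ P) :
    phiv v p ∈ Jid P := by
  have h := Polynomial.X_mul_divX_add (phiv v p)
  rw [phiv_coeff_zero] at h
  rw [← h]
  refine Ideal.add_mem _ ?_ ?_
  · exact Ideal.mem_sup_right (Ideal.mem_span_singleton.2 ⟨_, rfl⟩)
  · exact Ideal.mem_sup_left (Ideal.mem_map_of_mem _ hp)

lemma coeff_mem_of_mem_Jid_pow {P : Ideal Bpoly} :
    ∀ n : ℕ, ∀ h ∈ (Jid P) ^ n, ∀ k : ℕ, h.coeff k ∈ P ^ (n - k) := by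
  intro n
  induction n with
  | zero => simp
  | succ n ih =>
    intro h hh k
    rw [pow_succ (Jid P) n] at hh
    induction hh using Submodule.mul_induction_on' with
    | mem_mul_mem a ha b hb =>
      rcases Submodule.mem_sup.1 hb with ⟨b₁, hb₁, b₂, hb₂, rfl⟩
      rw [mul_add, Polynomial.coeff_add]
      refine Ideal.add_mem _ ?_ ?_
      · -- coefficients of b₁ are all in P
        have hc : ∀ j, b₁.coeff j ∈ P := Ideal.mem_map_C_iff.1 hb₁
        rw [Polynomial.coeff_mul]
        refine Ideal.sum_mem _ ?_
        rintro ⟨i, j⟩ hij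
        have hij' : i + j = k := Finset.HasAntidiagonal.mem_antidiagonal.1 hij
        have h1 : a.coeff i * b₁.coeff j ∈ P ^ (n - i) * P :=
          Ideal.mul_mem_mul (ih a ha i) (hc j)
        rw [← pow_succ] at h1
        exact Ideal.pow_le_pow_right (by omega) h1
      · rcases Ideal.mem_span_singleton.1 hb₂ with ⟨c, rfl⟩
        have hac : a * c ∈ (Jid P) ^ n := Ideal.mul_mem_right c _ ha
        have hX : a * (Polynomial.X * c) = Polynomial.X * (a * c) := by ring
        rw [hX]
        cases k with
        | zero =>
          simp
        | succ k =>
          rw [Polynomial.coeff_X_mul]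
          have := ih (a * c) hac k
          rwa [show n + 1 - (k + 1) = n - k by omega]
    | add x y hx hy ihx ihy =>
      rw [Polynomial.coeff_add]
      exact Ideal.add_mem _ ihx ihy

lemma phiv_coeff_mem {P : Ideal Bpoly} (v : Fin 2) {g : Bpoly} {n : ℕ}
    (hg : g ∈ P ^ n) (k : ℕ) : (phiv v g).coeff k ∈ P ^ (n - k) := by
  have h1 : phiv v g ∈ (Jid P) ^ n := by
    have hle : P.map (phiv v) ≤ Jid P :=
      Ideal.map_le_iff_le_comap.2 fun p hp => phiv_mem_Jid v hp
    have : phiv v g ∈ (P ^ n).map (phiv v) := Ideal.mem_map_of_mem _ hg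
    rw [Ideal.map_pow] at this
    exact Ideal.pow_right_mono hle n this
  exact coeff_mem_of_mem_Jid_pow n _ h1 k

noncomputable def fB : Bpoly := (X 0) ^ 2 - 5 ^ 9 * (X 1) ^ 3

lemma phiv0_f : phiv 0 fB = Polynomial.C fB + Polynomial.C (2 * X 0) * Polynomial.X
    + Polynomial.X ^ 2 := by
  simp only [phiv, fB, map_sub, map_mul, map_pow, MvPolynomial.aeval_X, map_ofNat,
    AlgHom.toRingHom_eq_coe, RingHom.coe_coe, map_add, Polynomial.C_mul]
  norm_num
  ring

lemma phiv1_f : phiv 1 fB = Polynomial.C fB + Polynomial.C (-(3 * 5 ^ 9 * (X 1) ^ 2)) * Polynomial.X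
    + Polynomial.C (-(3 * 5 ^ 9 * (X 1))) * Polynomial.X ^ 2
    + Polynomial.C (-(5 ^ 9 : Bpoly)) * Polynomial.X ^ 3 := by
  simp only [phiv, fB, map_sub, map_mul, map_pow, MvPolynomial.aeval_X, map_ofNat,
    AlgHom.toRingHom_eq_coe, RingHom.coe_coe, map_add, Polynomial.C_mul, map_neg,
    Polynomial.C_neg]
  norm_num
  ring

lemma coeff1_mul (p q : Polynomial Bpoly) :
    (p * q).coeff 1 = p.coeff 0 * q.coeff 1 + p.coeff 1 * q.coeff 0 := by
  rw [Polynomial.coeff_mul, Finset.Nat.sum_antidiagonal_eq_sum_range_succ_mk]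
  simp [Finset.sum_range_succ]

lemma coeff2_mul (p q : Polynomial Bpoly) :
    (p * q).coeff 2 = p.coeff 0 * q.coeff 2 + p.coeff 1 * q.coeff 1 + p.coeff 2 * q.coeff 0 := by
  rw [Polynomial.coeff_mul, Finset.Nat.sum_antidiagonal_eq_sum_range_succ_mk]
  simp [Finset.sum_range_succ]

lemma coeff_phiv0_f : (phiv 0 fB).coeff 0 = fB ∧ (phiv 0 fB).coeff 1 = 2 * X 0
    ∧ (phiv 0 fB).coeff 2 = 1 := by
  rw [phiv0_f]
  refine ⟨?_, ?_, ?_⟩ <;>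
    simp [Polynomial.coeff_add, Polynomial.coeff_C, Polynomial.coeff_C_mul,
      Polynomial.coeff_X, Polynomial.coeff_X_pow]

lemma coeff_phiv1_f : (phiv 1 fB).coeff 1 = -(3 * 5 ^ 9 * (X 1) ^ 2) := by
  rw [phiv1_f]
  simp only [Polynomial.coeff_add, Polynomial.coeff_C_mul, Polynomial.coeff_X_pow,
    Polynomial.coeff_X, Polynomial.coeff_C]
  norm_num


lemma hasOrderGE_iff {P : Ideal Bpoly} [P.IsPrime] (f : Bpoly) (n : ℕ) :
    hasOrderGE f P n ↔ ∃ s, s ∉ P ∧ s * f ∈ P ^ n := by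
  constructor
  · intro h
    rw [hasOrderGE, ← Ideal.map_pow] at h
    obtain ⟨⟨a, m⟩, hx⟩ := (IsLocalization.mem_map_algebraMap_iff
      (M := P.primeCompl) (S := Localization.AtPrime P)).1 h
    have hinj : Function.Injective (algebraMap Bpoly (Localization.AtPrime P)) :=
      IsLocalization.injective _ P.primeCompl_le_nonZeroDivisors
    have heq : algebraMap Bpoly (Localization.AtPrime P) ((m : Bpoly) * f)
        = algebraMap Bpoly (Localization.AtPrime P) (a : Bpoly) := by
      rw [map_mul, mul_comm]; exact hx
    refine ⟨m, m.2, ?_⟩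
    rw [hinj heq]
    exact a.2
  · rintro ⟨s, hs, hsf⟩
    have hu : IsUnit (algebraMap Bpoly (Localization.AtPrime P) s) :=
      IsLocalization.map_units (Localization.AtPrime P) (⟨s, hs⟩ : P.primeCompl)
    have h1 : algebraMap Bpoly (Localization.AtPrime P) (s * f) ∈
        (P.map (algebraMap Bpoly (Localization.AtPrime P))) ^ n := by
      rw [← Ideal.map_pow]
      exact Ideal.mem_map_of_mem _ hsf
    rw [map_mul] at h1
    rw [hasOrderGE]
    have : algebraMap Bpoly (Localization.AtPrime P) f =
        ↑hu.unit⁻¹ * (algebraMap Bpoly (Localization.AtPrime P) s *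
          algebraMap Bpoly (Localization.AtPrime P) f) := by
      rw [← mul_assoc, IsUnit.val_inv_mul, one_mul]
    rw [this]
    exact Ideal.mul_mem_left _ _ h1

lemma phiv1_coeff0 : (phiv 1 fB).coeff 0 = fB := phiv_coeff_zero 1 fB

lemma fB_mem {P : Ideal Bpoly} [hP : P.IsPrime] {s : Bpoly} (hs : s ∉ P)
    (hsf : s * fB ∈ P ^ 2) : fB ∈ P :=
  (hP.mem_or_mem (Ideal.pow_le_self two_ne_zero hsf)).resolve_left hs

lemma two_x_mem {P : Ideal Bpoly} [hP : P.IsPrime] {s : Bpoly} (hs : s ∉ P)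
    (hsf : s * fB ∈ P ^ 2) : 2 * X 0 ∈ P := by
  have hfP := fB_mem hs hsf
  have hc := phiv_coeff_mem (P := P) 0 hsf 1
  norm_num at hc
  simp only [coeff1_mul, phiv_coeff_zero, coeff_phiv0_f.1, coeff_phiv0_f.2.1] at hc
  have h2 : s * (2 * X 0) ∈ P := by
    have := P.sub_mem hc (Ideal.mul_mem_left _ ((phiv 0 s).coeff 1) hfP)
    simpa using this
  exact (hP.mem_or_mem h2).resolve_left hs

lemma order2_structure {P : Ideal Bpoly} [hP : P.IsPrime] {s : Bpoly} (hs : s ∉ P)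
    (hsf : s * fB ∈ P ^ 2) :
    (X 0 ∈ P ∧ X 1 ∈ P) ∨ (X 0 ∈ P ∧ (5 : Bpoly) ∈ P) := by
  have hfP := fB_mem hs hsf
  have h2x := two_x_mem hs hsf
  -- y-direction derivative
  have hc := phiv_coeff_mem (P := P) 1 hsf 1
  norm_num at hc
  simp only [coeff1_mul, phiv_coeff_zero, phiv1_coeff0, coeff_phiv1_f] at hc
  have h3y : 3 * 5 ^ 9 * (X 1) ^ 2 ∈ P := by
    have h2' : s * (3 * 5 ^ 9 * (X 1) ^ 2) ∈ P := by
      have := P.sub_mem (Ideal.mul_mem_left _ ((phiv 1 s).coeff 1) hfP) hc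
      have heq : (phiv 1 s).coeff 1 * fB -
          (s * -(3 * 5 ^ 9 * X 1 ^ 2) + (phiv 1 s).coeff 1 * fB)
          = s * (3 * 5 ^ 9 * (X 1) ^ 2) := by ring
      rwa [heq] at this
    exact (hP.mem_or_mem h2').resolve_left hs
  -- x ∈ P
  have hx : X 0 ∈ P := by
    by_contra hx
    have h2 : (2 : Bpoly) ∈ P := (hP.mem_or_mem h2x).resolve_right hx
    have hone : (1 : Bpoly) ∉ P := fun h => hP.ne_top (Ideal.eq_top_iff_one P |>.2 h)
    rcases hP.mem_or_mem h3y with h35 | hy2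
    · rcases hP.mem_or_mem h35 with h3 | h59
      · exact hone (by have := P.sub_mem h3 h2; norm_num at this; exact this)
      · have h5 : (5 : Bpoly) ∈ P := hP.mem_of_pow_mem 9 h59
        have : (1 : Bpoly) ∈ P := by
          have := P.sub_mem h5 (Ideal.mul_mem_left _ 2 h2)
          norm_num at this
          exact this
        exact hone this
    · have hy : X 1 ∈ P := hP.mem_of_pow_mem 2 hy2
      have hxx : X 0 * X 0 ∈ P := by
        have heq : X 0 * X 0 = fB + 5 ^ 9 * (X 1) ^ 2 * X 1 := by unfold fB; ring
        rw [heq]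
        exact P.add_mem hfP (Ideal.mul_mem_left _ _ hy)
      exact hx ((hP.mem_or_mem hxx).resolve_left hx)
  -- the 5⁹y³ part
  have h5y : 5 ^ 9 * (X 1) ^ 3 ∈ P := by
    have hmem2 : s * (5 ^ 9 * (X 1) ^ 3) ∈ P ^ 2 := by
      have heq : s * (5 ^ 9 * (X 1) ^ 3) = s * (X 0 * X 0) - s * fB := by unfold fB; ring
      rw [heq]
      refine Submodule.sub_mem _ ?_ hsf
      refine Ideal.mul_mem_left _ s ?_
      rw [pow_two]
      exact Ideal.mul_mem_mul hx hx
    exact (hP.mem_or_mem (Ideal.pow_le_self two_ne_zero hmem2)).resolve_left hs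
  rcases hP.mem_or_mem h5y with h59 | hy3
  · exact Or.inr ⟨hx, hP.mem_of_pow_mem 9 h59⟩
  · exact Or.inl ⟨hx, hP.mem_of_pow_mem 3 hy3⟩

lemma not_order3 {P : Ideal Bpoly} [hP : P.IsPrime] {s : Bpoly} (hs : s ∉ P)
    (hsf : s * fB ∈ P ^ 3) : False := by
  have hsf2 : s * fB ∈ P ^ 2 := Ideal.pow_le_pow_right (by omega) hsf
  have hfP := fB_mem hs hsf2
  have h2x := two_x_mem hs hsf2
  have hc := phiv_coeff_mem (P := P) 0 hsf 2
  norm_num at hc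
  simp only [coeff2_mul, phiv_coeff_zero, coeff_phiv0_f.1, coeff_phiv0_f.2.1, coeff_phiv0_f.2.2, mul_one] at hc
  have hsP : s ∈ P := by
    have := P.sub_mem (P.sub_mem hc (Ideal.mul_mem_left _ ((phiv 0 s).coeff 1) h2x))
      (Ideal.mul_mem_left _ ((phiv 0 s).coeff 2) hfP)
    have heq : s + (phiv 0 s).coeff 1 * (2 * X 0) + (phiv 0 s).coeff 2 * fB
        - (phiv 0 s).coeff 1 * (2 * X 0) - (phiv 0 s).coeff 2 * fB = s := by ring
    rwa [heq] at this
  exact hs hsP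

/-- The paper's example with `I_X = ⟨x² − 5⁹y³⟩`, `I_Z = ⟨0⟩` (here `x = X 0`,
`y = X 1`): for every prime `P` of `ℤ[x,y]`, `f = x² − 5⁹y³` has order `≥ 2`
at `P` iff `{x,y} ⊆ P` or `{x,5} ⊆ P`, and never has order `≥ 3`.  Hence the
maximal order of `V(f)` is 2 and its maximal order locus is
`V(x,y) ∪ V(x,5)`, a horizontal and a vertical component. -/
theorem maxOrd_locus_x_sq_sub_five_pow_nine_y_cube :
    ∀ (P : Ideal (MvPolynomial (Fin 2) ℤ)) [P.IsPrime],
      (hasOrderGE ((X 0) ^ 2 - 5 ^ 9 * (X 1) ^ 3 : MvPolynomial (Fin 2) ℤ) P 2 ↔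
        (((X 0 : MvPolynomial (Fin 2) ℤ) ∈ P ∧ (X 1 : MvPolynomial (Fin 2) ℤ) ∈ P) ∨
          ((X 0 : MvPolynomial (Fin 2) ℤ) ∈ P ∧ (5 : MvPolynomial (Fin 2) ℤ) ∈ P))) ∧
      ¬ hasOrderGE ((X 0) ^ 2 - 5 ^ 9 * (X 1) ^ 3 : MvPolynomial (Fin 2) ℤ) P 3 := by

  intro P hP
  have hone : (1 : Bpoly) ∉ P := fun h => hP.ne_top (Ideal.eq_top_iff_one P |>.2 h)
  constructor
  · constructor
    · intro h
      obtain ⟨s, hs, hsf⟩ := (hasOrderGE_iff _ 2).1 h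
      exact order2_structure hs hsf
    · rintro (⟨hx, hy⟩ | ⟨hx, h5⟩)
      · refine (hasOrderGE_iff _ 2).2 ⟨1, hone, ?_⟩
        rw [one_mul]
        refine Submodule.sub_mem _ (Ideal.pow_mem_pow hx 2) ?_
        refine Ideal.mul_mem_left _ _ ?_
        exact Ideal.pow_le_pow_right (by omega) (Ideal.pow_mem_pow hy 3)
      · refine (hasOrderGE_iff _ 2).2 ⟨1, hone, ?_⟩
        rw [one_mul]
        refine Submodule.sub_mem _ (Ideal.pow_mem_pow hx 2) ?_
        refine Ideal.mul_mem_right _ _ ?_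
        exact Ideal.pow_le_pow_right (by omega) (Ideal.pow_mem_pow h5 9)
  · intro h
    obtain ⟨s, hs, hsf⟩ := (hasOrderGE_iff _ 3).1 h
    exact not_order3 hs hsf
end
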